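/- arXiv:0811.1300 — 2 statements merged into one kernel-verified Lean document; each statement's English description precedes it below -/
import Mathlib

section
/- Let n ≥ 5 be an integer with n ≡ 1 (mod 4). There is a constant c > 0 depending only on n such that for every odd prime ℓ, the complete character sum S_n(ℓ) = Σ_{u=1}^{ℓ} Σ_{v=1}^{ℓ} (Δ_n(u,v) / ℓ) satisfies |S_n(ℓ)| ≤ c·ℓ, where (· / ℓ) denotes the Legendre symbol modulo ℓ. -/
/-- The discriminant of the trinomial `t^n + a*t + b`:
`Δ_n(a,b) = (n-1)^(n-1) * a^n + n^n * b^(n-1)`. -/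
def trinomialDisc (n : ℕ) (a b : ℤ) : ℤ :=
  ((n : ℤ) - 1) ^ (n - 1) * a ^ n + (n : ℤ) ^ n * b ^ (n - 1)

/-!
Modulo `ℓ` the sum becomes `∑ x, ∑ y, χ (A * x ^ n + B * y ^ (n - 1))` over `𝔽_ℓ`, with `χ` the
quadratic character, `A = (n - 1) ^ (n - 1)` and `B = n ^ n`. If `ℓ ∤ n - 1` it vanishes: as `n`
is odd, the column `y = 0` is `χ A * ∑ x, χ x = 0`; for `y ≠ 0` the substitution `x ↦ x * y`
and `χ (y ^ (n - 1)) = 1` turn the column into `∑ x, χ (A * x ^ n * y + B)`. Summed over all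
`y` these give `ℓ * χ B`, coming only from `x = 0`; as `y = 0` alone already contributes
`ℓ * χ B`, the columns `y ≠ 0` sum to zero. The finitely many primes `ℓ ∣ n - 1` are covered by the
trivial bound `ℓ ^ 2 ≤ n * ℓ`.
-/

open Finset

section QuadraticChar

variable {F : Type*} [Field F] [Fintype F] [DecidableEq F]

lemma quadraticChar_pow_of_odd {n : ℕ} (hn : Odd n) (x : F) :
    quadraticChar F (x ^ n) = quadraticChar F x := by
  rw [map_pow, ← MulChar.pow_apply' _ hn.pos.ne', (quadraticChar_isQuadratic F).pow_odd hn]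

lemma quadraticChar_pow_of_even {m : ℕ} (hm : Even m) {y : F} (hy : y ≠ 0) :
    quadraticChar F (y ^ m) = 1 := by
  obtain ⟨k, rfl⟩ := hm
  rw [← two_mul, pow_mul', quadraticChar_sq_one' (pow_ne_zero k hy)]

lemma abs_sum_quadraticChar_le_card {ι : Type*} [Fintype ι] (g : ι → F) :
    |∑ i, quadraticChar F (g i)| ≤ Fintype.card ι := by
  refine (abs_sum_le_sum_abs _ _).trans ?_
  have h : ∀ i, |quadraticChar F (g i)| ≤ 1 := fun i => by
    rcases quadraticChar_isQuadratic F (g i) with h | h | h <;> simp [h]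
  simpa using sum_le_sum fun i (_ : i ∈ univ) => h i

lemma sum_quadraticChar_mul_add (hF : ringChar F ≠ 2) {a : F} (ha : a ≠ 0) (b : F) :
    ∑ y, quadraticChar F (a * y + b) = 0 := by
  rw [← quadraticChar_sum_zero hF]
  exact Fintype.sum_equiv ((Equiv.mulLeft₀ a ha).trans (Equiv.addRight b)) _ _ fun _ => rfl

lemma sum_sum_quadraticChar_mul_pow_add_mul_pow (hF : ringChar F ≠ 2) {n : ℕ} (hn : Odd n)
    (hn1 : 1 < n) {a : F} (ha : a ≠ 0) (b : F) :
    ∑ x, ∑ y, quadraticChar F (a * x ^ n + b * y ^ (n - 1)) = 0 := by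
  obtain ⟨m, rfl⟩ := Nat.exists_eq_add_one_of_ne_zero hn.pos.ne'
  have hm : Even m := by simpa [Nat.odd_add_one] using hn
  have hcol_zero : ∑ x, quadraticChar F (a * x ^ (m + 1) + b * 0 ^ m) = 0 := by
    simp_rw [zero_pow (by omega : m ≠ 0), mul_zero, add_zero, map_mul,
      quadraticChar_pow_of_odd hn, ← mul_sum, quadraticChar_sum_zero hF, mul_zero]
  have hcol : ∀ y ≠ 0, ∑ x, quadraticChar F (a * x ^ (m + 1) + b * y ^ m) =
      ∑ x, quadraticChar F (a * x ^ (m + 1) * y + b) := fun y hy => by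
    refine (Fintype.sum_equiv (Equiv.mulRight₀ y hy) _ _ fun x => ?_).symm
    have : a * (x * y) ^ (m + 1) + b * y ^ m = y ^ m * (a * x ^ (m + 1) * y + b) := by ring
    rw [Equiv.mulRight₀_apply, this, map_mul, quadraticChar_pow_of_even hm hy, one_mul]
  have hrow : ∀ x, ∑ y, quadraticChar F (a * x ^ (m + 1) * y + b) =
      if x = 0 then Fintype.card F • quadraticChar F b else 0 := fun x => by
    split_ifs with hx
    · simp [hx]
    · exact sum_quadraticChar_mul_add hF (by simp [ha, hx]) b
  have htotal := calc
    ∑ y, ∑ x, quadraticChar F (a * x ^ (m + 1) * y + b)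
      = Fintype.card F • quadraticChar F b := by
        rw [sum_comm, sum_congr rfl fun x _ => hrow x, Fintype.sum_ite_eq']
    _ = ∑ x, quadraticChar F (a * x ^ (m + 1) * 0 + b) := by simp
  rw [← add_sum_erase _ _ (mem_univ 0)] at htotal
  rw [Nat.add_sub_cancel, sum_comm, ← add_sum_erase _ _ (mem_univ 0), hcol_zero, zero_add,
    sum_congr rfl fun y hy => hcol y (ne_of_mem_erase hy)]
  exact add_eq_left.mp htotal

end QuadraticChar

section ZModSums

variable {M : Type*} [AddCommMonoid M] (ℓ : ℕ) [NeZero ℓ]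

lemma sum_range_natCast_eq_sum (f : ZMod ℓ → M) : ∑ i ∈ range ℓ, f i = ∑ x, f x := by
  refine sum_nbij (↑) (fun _ _ => mem_univ _) (fun i hi j hj hij => ?_) (fun x _ => ?_)
    fun _ _ => rfl
  · simpa [Nat.mod_eq_of_lt (mem_range.mp hi), Nat.mod_eq_of_lt (mem_range.mp hj)] using
      congrArg ZMod.val hij
  · exact ⟨x.val, by simp [x.val_lt], x.natCast_zmod_val⟩

lemma sum_Icc_one_natCast_eq_sum (f : ZMod ℓ → M) : ∑ u ∈ Icc 1 ℓ, f u = ∑ x, f x := by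
  have := sum_Ico_add' (fun u : ℕ => f u) 0 ℓ 1
  rw [zero_add, Ico_add_one_right_eq_Icc, ← range_eq_Ico] at this
  rw [← this]
  push_cast
  rw [sum_range_natCast_eq_sum ℓ fun x => f (x + 1)]
  exact Fintype.sum_equiv (Equiv.addRight 1) _ _ fun _ => rfl

lemma sum_Icc_sum_Icc_natCast_eq_sum (f : ZMod ℓ → ZMod ℓ → M) :
    ∑ u ∈ Icc 1 ℓ, ∑ v ∈ Icc 1 ℓ, f u v = ∑ x, ∑ y, f x y :=
  (sum_Icc_one_natCast_eq_sum ℓ fun x => ∑ v ∈ Icc 1 ℓ, f x v).trans <|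
    Fintype.sum_congr _ _ fun x => sum_Icc_one_natCast_eq_sum ℓ (f x)

end ZModSums

lemma intCast_trinomialDisc {R : Type*} [CommRing R] (n : ℕ) (a b : ℤ) :
    ((trinomialDisc n a b : ℤ) : R) =
      ((n : R) - 1) ^ (n - 1) * (a : R) ^ n + (n : R) ^ n * (b : R) ^ (n - 1) := by
  simp [trinomialDisc]

lemma sum_Icc_legendreSym_trinomialDisc (ℓ : ℕ) [Fact ℓ.Prime] (n : ℕ) :
    ∑ u ∈ Icc 1 ℓ, ∑ v ∈ Icc 1 ℓ, legendreSym ℓ (trinomialDisc n u v) =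
      ∑ x : ZMod ℓ, ∑ y : ZMod ℓ, quadraticChar (ZMod ℓ)
        (((n : ZMod ℓ) - 1) ^ (n - 1) * x ^ n + (n : ZMod ℓ) ^ n * y ^ (n - 1)) := by
  simp only [legendreSym, intCast_trinomialDisc, Int.cast_natCast]
  exact sum_Icc_sum_Icc_natCast_eq_sum ℓ fun x y => quadraticChar (ZMod ℓ)
    (((n : ZMod ℓ) - 1) ^ (n - 1) * x ^ n + (n : ZMod ℓ) ^ n * y ^ (n - 1))

theorem stmt_3 (n : ℕ) (hn : 5 ≤ n) (hn4 : n % 4 = 1) :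
    ∃ c : ℝ, 0 < c ∧
      ∀ ℓ : ℕ, ∀ hℓ : ℓ.Prime, Odd ℓ →
        (|∑ u ∈ Finset.Icc 1 ℓ, ∑ v ∈ Finset.Icc 1 ℓ,
            @legendreSym ℓ ⟨hℓ⟩ (trinomialDisc n (u : ℤ) (v : ℤ))| : ℝ) ≤ c * ℓ := by
  refine ⟨n, by positivity, fun ℓ hℓ hℓ_odd => ?_⟩
  have : Fact ℓ.Prime := ⟨hℓ⟩
  have hF : ringChar (ZMod ℓ) ≠ 2 := by
    rw [ZMod.ringChar_zmod_n]; rintro rfl; exact Nat.not_odd_iff_even.mpr even_two hℓ_odd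
  suffices h : |∑ x : ZMod ℓ, ∑ y : ZMod ℓ, quadraticChar (ZMod ℓ)
      (((n : ZMod ℓ) - 1) ^ (n - 1) * x ^ n + (n : ZMod ℓ) ^ n * y ^ (n - 1))| ≤ (n * ℓ : ℤ) by
    rw [← sum_Icc_legendreSym_trinomialDisc] at h
    exact_mod_cast h
  by_cases hA : ((n : ZMod ℓ) - 1) ^ (n - 1) = 0
  · have hℓn : ℓ ≤ n - 1 := by
      refine Nat.le_of_dvd (by omega) ((ZMod.natCast_eq_zero_iff _ _).mp ?_)
      rw [Nat.cast_sub (by omega), Nat.cast_one]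
      exact (pow_eq_zero_iff'.mp hA).1
    calc _ ≤ (Fintype.card (ZMod ℓ × ZMod ℓ) : ℤ) := by
          rw [← Fintype.sum_prod_type']; exact abs_sum_quadraticChar_le_card _
      _ = ℓ * ℓ := by simp
      _ ≤ n * ℓ := by gcongr; omega
  · rw [sum_sum_quadraticChar_mul_pow_add_mul_pow hF (Nat.odd_iff.mpr (by omega)) (by omega) hA]
    positivity
end

section
/- Let n ≥ 5 be an integer with n ≡ 1 (mod 4), let a, b be integers such that f = t^n + a·t + b is irreducible over ℚ, and let θ be a root of f in an algebraic closure of ℚ. Then the discriminant of the power basis 1, θ, θ², …, θ^{n-1} of the number field ℚ(θ) over ℚ equals (n-1)^{n-1}·a^n + n^n·b^{n-1}. -/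
/-!
The discriminant of the power basis of `θ` is `(-1) ^ (n (n - 1) / 2) N(f'(θ))`, and
`N(f'(θ))` is the product of `f'(r)` over the roots `r` of `f`. At a root,
`-r f'(r) = n b - (1 - n) a r`, while `∏ (-r) = b`; so `b ∏ f'(r) = ∏ (n b - (1 - n) a r)`,
the homogenisation of `f` evaluated at `(n b, (1 - n) a)`. Cancelling `b`, which is nonzero because
`f` is irreducible, leaves `n ^ n b ^ (n - 1) + (1 - n) ^ (n - 1) a ^ n`; for `n ≡ 1 (mod 4)`
both signs disappear.
-/

open Polynomial IntermediateField

section Trinomial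

variable {K : Type*} [Field K] {n : ℕ} {a b : K}

theorem degree_C_mul_X_add_C_lt (hn : 2 ≤ n) : (C a * X + C b).degree < (n : WithBot ℕ) :=
  degree_linear_le.trans_lt (by exact_mod_cast (show 1 < n by omega))

theorem monic_X_pow_add_C_mul_X_add_C (hn : 2 ≤ n) : (X ^ n + C a * X + C b).Monic := by
  rw [add_assoc]
  exact monic_X_pow_add (degree_C_mul_X_add_C_lt hn)

theorem natDegree_X_pow_add_C_mul_X_add_C (hn : 2 ≤ n) :
    (X ^ n + C a * X + C b).natDegree = n := by
  rw [add_assoc, natDegree_add_eq_left_of_degree_lt, natDegree_X_pow]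
  simpa using degree_C_mul_X_add_C_lt hn

theorem ne_zero_of_irreducible_X_pow_add_C_mul_X_add_C (hn : 2 ≤ n)
    (hirr : Irreducible (X ^ n + C a * X + C b)) : b ≠ 0 := by
  rintro rfl
  obtain ⟨m, rfl⟩ := Nat.exists_eq_add_of_le' hn
  have hfac : X ^ (m + 2) + C a * X + C 0 = X * (X ^ (m + 1) + C a) := by
    rw [C_0]; ring
  rcases hirr.isUnit_or_isUnit hfac with h | h
  · exact not_isUnit_X h
  · have := natDegree_eq_zero_of_isUnit h
    rw [natDegree_X_pow_add_C] at this
    omega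

theorem prod_roots_sub_mul_X_pow_add_C_mul_X_add_C (hn : 2 ≤ n)
    (hs : (X ^ n + C a * X + C b).Splits) (c d : K) :
    ((X ^ n + C a * X + C b).roots.map fun r => d - c * r).prod =
      d ^ n + a * d * c ^ (n - 1) + b * c ^ n := by
  have hcard : Multiset.card (X ^ n + C a * X + C b).roots = n := by
    rw [← hs.natDegree_eq_card_roots, natDegree_X_pow_add_C_mul_X_add_C hn]
  obtain ⟨m, rfl⟩ := Nat.exists_eq_add_of_le' hn
  rw [show m + 2 - 1 = m + 1 by omega]
  by_cases hc : c = 0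
  · simp only [hc, zero_mul, sub_zero, Multiset.map_const', Multiset.prod_replicate, hcard]
    ring
  · have heval := hs.eval_eq_prod_roots (d / c)
    rw [(monic_X_pow_add_C_mul_X_add_C hn).leadingCoeff, one_mul] at heval
    calc _ = ((X ^ (m + 2) + C a * X + C b).roots.map fun r => c * (d / c - r)).prod := by
          congr 1; refine Multiset.map_congr rfl fun r _ => ?_; field_simp
      _ = c ^ (m + 2) * (d / c) ^ (m + 2) + a * d * c ^ (m + 1) + b * c ^ (m + 2) := by
          rw [Multiset.prod_map_mul, Multiset.map_const', Multiset.prod_replicate, hcard, ← heval]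
          simp only [eval_add, eval_pow, eval_X, eval_mul, eval_C]
          field_simp
          ring
      _ = _ := by rw [div_pow, mul_div_cancel₀ _ (pow_ne_zero _ hc)]

theorem prod_roots_neg_X_pow_add_C_mul_X_add_C (hn : 2 ≤ n)
    (hs : (X ^ n + C a * X + C b).Splits) :
    ((X ^ n + C a * X + C b).roots.map fun r => -r).prod = b := by
  simpa [zero_pow (by omega : n ≠ 0)] using prod_roots_sub_mul_X_pow_add_C_mul_X_add_C hn hs 1 0

theorem eval_derivative_X_pow_add_C_mul_X_add_C (r : K) :
    (X ^ n + C a * X + C b).derivative.eval r = n * r ^ (n - 1) + a := by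
  simp [derivative_X_pow]

theorem prod_roots_eval_derivative_X_pow_add_C_mul_X_add_C (hn : 2 ≤ n) (hb : b ≠ 0)
    (hs : (X ^ n + C a * X + C b).Splits) :
    ((X ^ n + C a * X + C b).roots.map fun r => (X ^ n + C a * X + C b).derivative.eval r).prod =
      n ^ n * b ^ (n - 1) + (1 - n) ^ (n - 1) * a ^ n := by
  obtain ⟨m, rfl⟩ : ∃ m, n = m + 1 := ⟨n - 1, by omega⟩
  have hmul : ((X ^ (m + 1) + C a * X + C b).roots.map fun r =>
      (X ^ (m + 1) + C a * X + C b).derivative.eval r).prod * b =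
      ((X ^ (m + 1) + C a * X + C b).roots.map fun r =>
        (m + 1) * b - (1 - (m + 1)) * a * r).prod := by
    conv_lhs => arg 2; rw [← prod_roots_neg_X_pow_add_C_mul_X_add_C hn hs]
    rw [← Multiset.prod_map_mul]
    refine congrArg Multiset.prod (Multiset.map_congr rfl fun r hr => ?_)
    have hroot : r ^ (m + 1) + a * r + b = 0 := by simpa using isRoot_of_mem_roots hr
    rw [eval_derivative_X_pow_add_C_mul_X_add_C, Nat.add_sub_cancel]
    push_cast
    linear_combination (-(m + 1 : K)) * hroot
  rw [prod_roots_sub_mul_X_pow_add_C_mul_X_add_C hn hs] at hmul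
  refine mul_right_cancel₀ hb (hmul.trans ?_)
  simp only [Nat.add_sub_cancel, mul_pow]
  push_cast
  generalize (m : K) + 1 = N
  ring

end Trinomial

theorem PowerBasis.algebraMap_norm_aeval_gen {K L E : Type*} [Field K] [Field L] [Field E]
    [Algebra K L] [Algebra K E] [Algebra.IsSeparable K L] [IsAlgClosed E]
    (pb : PowerBasis K L) (g : K[X]) :
    algebraMap K E (Algebra.norm K (aeval pb.gen g)) =
      (((minpoly K pb.gen).aroots E).map fun r => aeval r g).prod := by
  classical
  have := pb.finite
  rw [Algebra.norm_eq_prod_embeddings,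
    Fintype.prod_equiv pb.liftEquiv' (fun σ : L →ₐ[K] E => σ (aeval pb.gen g))
      (fun y => aeval (y : E) g) fun σ => by simp [aeval_algHom_apply],
    Finset.prod_mem_multiset _ _ (fun r => aeval r g) fun _ => rfl,
    Finset.prod_eq_multiset_prod, Multiset.toFinset_val,
    Multiset.dedup_eq_self.mpr
      (nodup_roots (Separable.map (Algebra.IsSeparable.isSeparable K pb.gen)))]

theorem Algebra.discr_pow_adjoinSimple_gen {K L : Type*} [Field K] [Field L] [Algebra K L]
    {θ : L} (hθ : IsIntegral K θ) [Algebra.IsSeparable K K⟮θ⟯] {n : ℕ}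
    (hn : (minpoly K θ).natDegree = n) :
    Algebra.discr K (fun i : Fin n => AdjoinSimple.gen K θ ^ (i : ℕ)) =
      (-1) ^ (n * (n - 1) / 2) *
        Algebra.norm K (aeval (AdjoinSimple.gen K θ) (minpoly K θ).derivative) := by
  subst hn
  have := IntermediateField.adjoin.finiteDimensional hθ
  have h := Algebra.discr_powerBasis_eq_norm K (IntermediateField.adjoin.powerBasis hθ)
  rw [PowerBasis.coe_basis, IntermediateField.adjoin.finrank hθ,
    IntermediateField.adjoin.powerBasis_gen, minpoly_gen] at h
  exact h

theorem discr_pow_adjoinSimple_gen_of_X_pow_add_C_mul_X_add_C {K L : Type*} [Field K]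
    [PerfectField K] [Field L] [Algebra K L] {n : ℕ} (hn : 2 ≤ n) {a b : K}
    (hirr : Irreducible (X ^ n + C a * X + C b)) {θ : L}
    (hθ : aeval θ (X ^ n + C a * X + C b) = 0) :
    Algebra.discr K (fun i : Fin n => AdjoinSimple.gen K θ ^ (i : ℕ)) =
      (-1) ^ (n * (n - 1) / 2) * (n ^ n * b ^ (n - 1) + (1 - n) ^ (n - 1) * a ^ n) := by
  have hmonic := monic_X_pow_add_C_mul_X_add_C (a := a) (b := b) hn
  have hmin : minpoly K θ = X ^ n + C a * X + C b :=
    (minpoly.eq_of_irreducible_of_monic hirr hθ hmonic).symm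
  have hθint : IsIntegral K θ := ⟨_, hmonic, hθ⟩
  have := IntermediateField.adjoin.finiteDimensional hθint
  rw [Algebra.discr_pow_adjoinSimple_gen hθint
    (by rw [hmin, natDegree_X_pow_add_C_mul_X_add_C hn])]
  congr 1
  apply (algebraMap K (AlgebraicClosure K)).injective
  rw [← IntermediateField.adjoin.powerBasis_gen hθint, PowerBasis.algebraMap_norm_aeval_gen,
    IntermediateField.adjoin.powerBasis_gen, minpoly_gen, hmin]
  have hb : algebraMap K (AlgebraicClosure K) b ≠ 0 := by
    simpa using ne_zero_of_irreducible_X_pow_add_C_mul_X_add_C hn hirr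
  have hmap : (X ^ n + C a * X + C b).map (algebraMap K (AlgebraicClosure K)) =
      X ^ n + C (algebraMap K _ a) * X + C (algebraMap K _ b) := by
    simp
  simp only [aeval_def, eval₂_eq_eval_map, ← derivative_map, aroots_def, hmap]
  rw [prod_roots_eval_derivative_X_pow_add_C_mul_X_add_C hn hb (IsAlgClosed.splits _)]
  simp

theorem stmt_10 (n : ℕ) (hn : 5 ≤ n) (hn4 : n % 4 = 1) (a b : ℤ)
    (hirr : Irreducible (X ^ n + C ((a : ℚ)) * X + C ((b : ℚ))))
    (θ : AlgebraicClosure ℚ)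
    (hθ : Polynomial.aeval θ (X ^ n + C ((a : ℚ)) * X + C ((b : ℚ))) = 0) :
    -- the discriminant of the power basis `1, θ, θ², …, θ^{n-1}` of `ℚ(θ)/ℚ`
    Algebra.discr ℚ (fun i : Fin n => (AdjoinSimple.gen ℚ θ) ^ (i : ℕ)) =
      ((((n : ℤ) - 1) ^ (n - 1) * a ^ n + (n : ℤ) ^ n * b ^ (n - 1) : ℤ) : ℚ) := by
  have hpred : Even (n - 1) := ⟨2 * (n / 4), by omega⟩
  have hsign : Even (n * (n - 1) / 2) := by
    rw [Nat.mul_div_assoc _ hpred.two_dvd]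
    exact (show Even ((n - 1) / 2) from ⟨n / 4, by omega⟩).mul_left n
  refine (discr_pow_adjoinSimple_gen_of_X_pow_add_C_mul_X_add_C (by omega) hirr hθ).trans ?_
  rw [hsign.neg_one_pow, one_mul, ← neg_sub, hpred.neg_pow]
  push_cast
  ring
end
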